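/- Let v and w be valuations on a ring B with kernels p = ker v and q = ker w satisfying p ⊆ q, with semi-valuation rings S_v ⊆ B_p and S_w ⊆ B_q respectively. Then w is a primary specialization of v if and only if the canonical homomorphism B_q → B_p maps S_w into S_v and the induced homomorphism S_w → S_v is a local homomorphism of local rings. -/

import Mathlib

/-!
Writing elements of `B_q` as fractions `b / s` with `s ∉ q`, the condition on `f` says: for
`s ∉ q`, `w b ≤ w s → v b ≤ v s` and `w b < w s → v b < v s` (`Valuation.Dominates`).

A primary specialization satisfies this: `w` agrees with `v` up to equivalence on the elements
whose value lies in the convex subgroup `Λ`, and since `Λ` contains every value `≥ 1`, any value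
of `v` outside `Λ` is smaller than every value in `Λ`.

Conversely, the condition forces `v` to be smaller on `q` than off `q`, so killing `q` turns `v`
into a valuation, equivalent to `w`; the convex subgroup generated by `v(B ∖ q)` is then the
`Λ` exhibiting it as a primary specialization.
-/

/-- A subgroup `Λ` of the units of `Γ` is *convex* if `γ ∈ Λ` whenever
`λ ≤ γ ≤ 1` or `1 ≤ γ ≤ λ` for some `λ ∈ Λ`. -/
def IsConvexSubgroup {Γ : Type*} [LinearOrderedCommGroupWithZero Γ] (Λ : Subgroup Γˣ) : Prop :=
  ∀ γ : Γˣ, (∃ l ∈ Λ, (((l : Γ) ≤ (γ : Γ) ∧ (γ : Γ) ≤ 1) ∨ ((1 : Γ) ≤ (γ : Γ) ∧ (γ : Γ) ≤ (l : Γ)))) →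
    γ ∈ Λ

/-- An element `g` of `Γ` lies in (the image with zero of) a subgroup `Λ` of `Γˣ`. -/
def MemWZ {Γ : Type*} [LinearOrderedCommGroupWithZero Γ] (Λ : Subgroup Γˣ) (g : Γ) : Prop :=
  ∃ u ∈ Λ, (u : Γ) = g

/-- `w` is, up to equivalence of valuations, a primary specialization of `v`: there is a
valuation `w'` equivalent to `w` and a convex subgroup `Λ` of the value group of `v`
containing `cΓ_v` with `w' b = v b` if `v b ∈ Λ` and `w' b = 0` otherwise. -/
def IsPrimarySpecialization {B : Type*} [CommRing B] {Γ Γ' : Type*}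
    [LinearOrderedCommGroupWithZero Γ] [LinearOrderedCommGroupWithZero Γ']
    (v : Valuation B Γ) (w : Valuation B Γ') : Prop :=
  ∃ w' : Valuation B Γ, w.IsEquiv w' ∧
    ∃ Λ : Subgroup Γˣ, IsConvexSubgroup Λ ∧ (∀ x : B, 1 ≤ v x → MemWZ Λ (v x)) ∧
      ∀ x : B, (MemWZ Λ (v x) ∧ w' x = v x) ∨ (¬ MemWZ Λ (v x) ∧ w' x = 0)

theorem IsConvexSubgroup.lt_of_memWZ_of_not_memWZ {Γ : Type*}
    [LinearOrderedCommGroupWithZero Γ] {Λ : Subgroup Γˣ} (hΛ : IsConvexSubgroup Λ) {a b : Γ}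
    (ha : MemWZ Λ a) (hb : ¬MemWZ Λ b) (hb1 : b ≤ 1) : b < a := by
  obtain ⟨u, hu, rfl⟩ := ha
  refine lt_of_not_ge fun hub => hb ?_
  have hb0 : b ≠ 0 := ((zero_lt_iff.2 u.ne_zero).trans_le hub).ne'
  exact ⟨Units.mk0 b hb0, hΛ _ ⟨u, hu, .inl ⟨hub, hb1⟩⟩, rfl⟩

namespace Valuation

variable {B : Type*} [CommRing B] {Γ Γ' : Type*}
  [LinearOrderedCommGroupWithZero Γ] [LinearOrderedCommGroupWithZero Γ']

section Truncate

variable (v : Valuation B Γ) (q : Ideal B) [q.IsPrime]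

open Classical in
noncomputable def truncate (hq : ∀ y ∈ q, ∀ s ∉ q, v y < v s) : Valuation B Γ where
  toFun x := if x ∈ q then 0 else v x
  map_zero' := if_pos q.zero_mem
  map_one' := by simp [(Ideal.ne_top_iff_one q).1 Ideal.IsPrime.ne_top']
  map_mul' x y := by
    by_cases hx : x ∈ q
    · simp [hx, q.mul_mem_right y hx]
    by_cases hy : y ∈ q
    · simp [hy, q.mul_mem_left x hy]
    · simp [hx, hy, Ideal.IsPrime.mul_mem_iff_mem_or_mem]
  map_add_le_max' x y := by
    by_cases hxy : x + y ∈ q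
    · simp [hxy]
    by_cases hx : x ∈ q <;> by_cases hy : y ∈ q
    · exact absurd (q.add_mem hx hy) hxy
    · simpa [hxy, hx, hy] using (v.map_add_eq_of_lt_right (hq x hx y hy)).le
    · simpa [hxy, hx, hy] using (v.map_add_eq_of_lt_left (hq y hy x hx)).le
    · simp [hxy, hx, hy, v.map_add]

variable {v q}

open Classical in
@[simp]
theorem truncate_apply (hq : ∀ y ∈ q, ∀ s ∉ q, v y < v s) (x : B) :
    v.truncate q hq x = if x ∈ q then 0 else v x := rfl

end Truncate

section ConvexSpan

variable (v : Valuation B Γ) (S : Submonoid B)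

/-- The smallest convex subgroup containing `v(S)`, provided `v(S) ⊆ Γˣ`. -/
def convexSpan : Subgroup Γˣ where
  carrier := {γ | ∃ s₁ t₁ s₂ t₂ : S, v t₁ ≤ γ * v s₁ ∧ γ * v t₂ ≤ v s₂}
  one_mem' := ⟨1, 1, 1, 1, by simp, by simp⟩
  mul_mem' := by
    rintro γ δ ⟨s₁, t₁, s₂, t₂, h₁, h₂⟩ ⟨s₁', t₁', s₂', t₂', h₁', h₂'⟩
    refine ⟨s₁ * s₁', t₁ * t₁', s₂ * s₂', t₂ * t₂', ?_, ?_⟩ <;>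
      simp only [Submonoid.coe_mul, map_mul, Units.val_mul] <;>
      rw [mul_mul_mul_comm]
    exacts [mul_le_mul' h₁ h₁', mul_le_mul' h₂ h₂']
  inv_mem' := by
    rintro γ ⟨s₁, t₁, s₂, t₂, h₁, h₂⟩
    refine ⟨s₂, t₂, s₁, t₁, ?_, ?_⟩
    · rwa [Units.val_inv_eq_inv_val, le_inv_mul_iff₀ (zero_lt_iff.2 γ.ne_zero)]
    · rwa [Units.val_inv_eq_inv_val, inv_mul_le_iff₀ (zero_lt_iff.2 γ.ne_zero)]

theorem isConvexSubgroup_convexSpan : IsConvexSubgroup (v.convexSpan S) := by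
  rintro γ ⟨l, ⟨s₁, t₁, s₂, t₂, h₁, h₂⟩, ⟨hlγ, hγ1⟩ | ⟨h1γ, hγl⟩⟩
  · exact ⟨s₁, t₁, 1, 1, h₁.trans (mul_le_mul_left hlγ _), by simpa using hγ1⟩
  · exact ⟨1, 1, s₂, t₂, by simpa using h1γ, (mul_le_mul_left hγl _).trans h₂⟩

theorem mk0_mem_convexSpan {x : B} (hx : x ∈ S) (h0 : v x ≠ 0) :
    Units.mk0 (v x) h0 ∈ v.convexSpan S :=
  ⟨1, ⟨x, hx⟩, ⟨x, hx⟩, 1, by simp, by simp⟩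

end ConvexSpan

/-- `S_v` dominates `S_w`, read off on the fractions `b / s ∈ B_q`. -/
def Dominates (v : Valuation B Γ) (w : Valuation B Γ') : Prop :=
  ∀ b s : B, s ∉ w.supp → (w b ≤ w s → v b ≤ v s) ∧ (w b < w s → v b < v s)

namespace Dominates

variable {v : Valuation B Γ} {w : Valuation B Γ'} (h : v.Dominates w)
include h

theorem lt_of_mem_supp {y s : B} (hy : y ∈ w.supp) (hs : s ∉ w.supp) : v y < v s :=
  (h y s hs).2 <| by
    rw [(w.mem_supp_iff y).1 hy, zero_lt_iff]
    exact mt (w.mem_supp_iff s).2 hs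

theorem map_ne_zero {s : B} (hs : s ∉ w.supp) : v s ≠ 0 := by
  simpa using (h.lt_of_mem_supp w.supp.zero_mem hs).ne'

theorem le_of_le {b s : B} (hs : s ∉ w.supp) (hle : v s ≤ v b) : w s ≤ w b :=
  not_lt.1 fun hlt => not_lt.2 hle ((h b s hs).2 hlt)

theorem memWZ_convexSpan_iff (x : B) :
    MemWZ (v.convexSpan w.supp.primeCompl) (v x) ↔ x ∉ w.supp := by
  constructor
  · rintro ⟨u, ⟨s₁, t₁, -, -, h₁, -⟩, hu⟩ hx
    rw [hu, ← map_mul] at h₁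
    have := h.le_of_le t₁.2 h₁
    rw [map_mul, (w.mem_supp_iff x).1 hx, zero_mul, le_zero_iff] at this
    exact t₁.2 ((w.mem_supp_iff _).2 this)
  · exact fun hx => ⟨_, v.mk0_mem_convexSpan _ hx (h.map_ne_zero hx), rfl⟩

theorem isEquiv_truncate :
    w.IsEquiv (v.truncate w.supp fun _ hy _ hs => h.lt_of_mem_supp hy hs) := by
  intro r s
  by_cases hr : r ∈ w.supp
  · simp [hr, (w.mem_supp_iff r).1 hr]
  by_cases hs : s ∈ w.supp
  · simp [hr, hs, (w.mem_supp_iff s).1 hs, h.map_ne_zero hr, mt (w.mem_supp_iff r).2 hr]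
  · simpa [hr, hs] using ⟨(h r s hs).1, h.le_of_le hr⟩

theorem isPrimarySpecialization : IsPrimarySpecialization v w := by
  refine ⟨_, h.isEquiv_truncate, _, v.isConvexSubgroup_convexSpan w.supp.primeCompl,
    fun x hx => ?_, fun x => ?_⟩
  · refine (h.memWZ_convexSpan_iff x).2 fun hxq => ?_
    exact (h.lt_of_mem_supp (s := 1) hxq (by simp)).not_ge (by simpa using hx)
  · by_cases hx : x ∈ w.supp
    · exact .inr ⟨(h.memWZ_convexSpan_iff x).not.2 (not_not.2 hx), if_pos hx⟩
    · exact .inl ⟨(h.memWZ_convexSpan_iff x).2 hx, if_neg hx⟩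

end Dominates

theorem dominates_of_isPrimarySpecialization {v : Valuation B Γ} {w : Valuation B Γ'}
    (h : IsPrimarySpecialization v w) : v.Dominates w := by
  obtain ⟨w', hequiv, Λ, hconv, hcG, hspec⟩ := h
  intro b s hs
  have hw's : w' s ≠ 0 := hequiv.eq_zero.not.1 (mt (w.mem_supp_iff s).2 hs)
  obtain ⟨hsΛ, hvs⟩ := (hspec s).resolve_right fun h0 => hw's h0.2
  have hbelow : ¬MemWZ Λ (v b) → v b < v s := fun hb =>
    hconv.lt_of_memWZ_of_not_memWZ hsΛ hb (not_le.1 (mt (hcG b) hb)).le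
  rcases hspec b with ⟨-, hvb⟩ | ⟨hb, -⟩
  · rw [← hvb, ← hvs]
    exact ⟨hequiv.le_iff_le.1, hequiv.lt_iff_lt.1⟩
  · exact ⟨fun _ => (hbelow hb).le, fun _ => hbelow hb⟩

section Localization

open IsLocalization

variable {v : Valuation B Γ} {w : Valuation B Γ'}
  {f : Localization.AtPrime w.supp →+* Localization.AtPrime v.supp}

theorem extendToLocalization_map_mk'
    (hf : f.comp (algebraMap B (Localization.AtPrime w.supp))
      = algebraMap B (Localization.AtPrime v.supp))
    (b : B) {s : w.supp.primeCompl} (hs : (s : B) ∉ v.supp) :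
    v.extendToLocalization le_rfl (Localization.AtPrime v.supp)
      (f (mk' (Localization.AtPrime w.supp) b s)) = v b / v s := by
  have hmk : f (mk' _ b s) =
      mk' (Localization.AtPrime v.supp) b (⟨s, hs⟩ : v.supp.primeCompl) := by
    rw [eq_mk'_iff_mul_eq, ← hf, RingHom.comp_apply, RingHom.comp_apply, ← map_mul, mk'_spec]
  rw [hmk, extendToLocalization_mk', div_eq_mul_inv]

theorem dominates_iff_localization (hpq : v.supp ≤ w.supp)
    (hf : f.comp (algebraMap B (Localization.AtPrime w.supp))
      = algebraMap B (Localization.AtPrime v.supp)) :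
    v.Dominates w ↔
      ((∀ x : Localization.AtPrime w.supp,
          (w.extendToLocalization le_rfl (Localization.AtPrime w.supp)) x ≤ 1 →
          (v.extendToLocalization le_rfl (Localization.AtPrime v.supp)) (f x) ≤ 1) ∧
        (∀ x : Localization.AtPrime w.supp,
          (w.extendToLocalization le_rfl (Localization.AtPrime w.supp)) x < 1 →
          (v.extendToLocalization le_rfl (Localization.AtPrime v.supp)) (f x) < 1)) := by
  have hw_pos (s : w.supp.primeCompl) : 0 < w s :=
    zero_lt_iff.2 (mt (w.mem_supp_iff _).2 s.2)
  have hv_supp (s : w.supp.primeCompl) : (s : B) ∉ v.supp := fun h => s.2 (hpq h)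
  have hv_pos (s : w.supp.primeCompl) : 0 < v s :=
    zero_lt_iff.2 (mt (v.mem_supp_iff _).2 (hv_supp s))
  have hw (b : B) (s : w.supp.primeCompl) :
      w.extendToLocalization le_rfl _ (mk' (Localization.AtPrime w.supp) b s) = w b / w s := by
    rw [extendToLocalization_mk', div_eq_mul_inv]
  have hv (b : B) (s : w.supp.primeCompl) :
      v.extendToLocalization le_rfl _ (f (mk' _ b s)) = v b / v s :=
    extendToLocalization_map_mk' hf b (hv_supp s)
  constructor
  · intro hD
    constructor <;> intro x hx <;>
      obtain ⟨⟨b, s⟩, rfl⟩ := mk'_surjective w.supp.primeCompl x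
    · rw [hw, div_le_one₀ (hw_pos s)] at hx
      rw [hv, div_le_one₀ (hv_pos s)]
      exact (hD b s s.2).1 hx
    · rw [hw, div_lt_one₀ (hw_pos s)] at hx
      rw [hv, div_lt_one₀ (hv_pos s)]
      exact (hD b s s.2).2 hx
  · rintro ⟨hle, hlt⟩ b s hs
    have hle := hle (mk' _ b (⟨s, hs⟩ : w.supp.primeCompl))
    have hlt := hlt (mk' _ b (⟨s, hs⟩ : w.supp.primeCompl))
    rw [hw, hv, div_le_one₀ (hw_pos _), div_le_one₀ (hv_pos _)] at hle
    rw [hw, hv, div_lt_one₀ (hw_pos _), div_lt_one₀ (hv_pos _)] at hlt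
    exact ⟨hle, hlt⟩

end Localization

end Valuation

/-- `S_v = {x ∈ B_p : v x ≤ 1}` has maximal ideal `{x : v x < 1}`, so the two conjuncts say that
`f` maps `S_w` into `S_v` and that the induced map is local. -/
theorem stmt12 {B : Type*} [CommRing B] {Γ Γ' : Type*}
    [LinearOrderedCommGroupWithZero Γ] [LinearOrderedCommGroupWithZero Γ']
    (v : Valuation B Γ) (w : Valuation B Γ')
    (hpq : v.supp ≤ w.supp)
    (f : Localization.AtPrime w.supp →+* Localization.AtPrime v.supp)
    (hf : f.comp (algebraMap B (Localization.AtPrime w.supp))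
      = algebraMap B (Localization.AtPrime v.supp)) :
    IsPrimarySpecialization v w ↔
      ((∀ x : Localization.AtPrime w.supp,
          (w.extendToLocalization le_rfl (Localization.AtPrime w.supp)) x ≤ 1 →
          (v.extendToLocalization le_rfl (Localization.AtPrime v.supp)) (f x) ≤ 1) ∧
        (∀ x : Localization.AtPrime w.supp,
          (w.extendToLocalization le_rfl (Localization.AtPrime w.supp)) x < 1 →
          (v.extendToLocalization le_rfl (Localization.AtPrime v.supp)) (f x) < 1)) := by
  rw [← Valuation.dominates_iff_localization hpq hf]
  exact ⟨Valuation.dominates_of_isPrimarySpecialization,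
    Valuation.Dominates.isPrimarySpecialization⟩
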